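/- arXiv:1310.1035 — 9 statements merged into one kernel-verified Lean document; each statement's English description precedes it below -/
import Mathlib

section
/- Let Ω ⊆ ℍ be an open set and let f : Ω → ℍ be real differentiable. Then f is left slice hyperholomorphic on Ω if and only if f admits a left slice derivative at every point of Ω. -/
local notation "ℍ" => Quaternion ℝ

/-- The complex plane `ℂ_I = ℝ + Iℝ` through `1` and `I`. -/
def slicePlane (I : ℍ) : Set ℍ := {p | ∃ x y : ℝ, p = (x : ℍ) + (y : ℍ) * I}

/-- `f` admits a left slice derivative at `p₀`: there is a common value `d` such that along
every complex plane `ℂ_I` (with `I² = -1`) containing `p₀`, the difference quotient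
`(p - p₀)⁻¹ (f p - f p₀)` tends to `d`.  For a nonreal `p₀` only the plane `ℂ_{I_{p₀}}`
qualifies; for a real `p₀` this requires existence along every plane with a value
independent of `I`. -/
def AdmitsSliceDerivAt (f : ℍ → ℍ) (p₀ : ℍ) : Prop :=
  ∃ d : ℍ, ∀ I : ℍ, I ^ 2 = -1 → p₀ ∈ slicePlane I →
    Filter.Tendsto (fun p => (p - p₀)⁻¹ * (f p - f p₀))
      (nhdsWithin p₀ (slicePlane I \ {p₀})) (nhds d)

open Filter Asymptotics Topology in
lemma aux_slope (f : ℍ → ℍ) (L : ℍ →L[ℝ] ℍ) (p v : ℍ) (hL : HasFDerivAt f L p) :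
    Filter.Tendsto (fun t : ℝ => ((t • v : ℍ))⁻¹ * (f (p + t • v) - f p))
      (nhdsWithin 0 {(0:ℝ)}ᶜ) (nhds (v⁻¹ * L v)) := by
  have h1 : HasDerivAt (fun t : ℝ => p + t • v) v 0 := by
    simpa using ((hasDerivAt_id (0:ℝ)).smul_const v).const_add p
  have h2 : HasDerivAt (fun t : ℝ => f (p + t • v)) (L v) 0 :=
    HasFDerivAt.comp_hasDerivAt 0 (by simpa using hL) h1
  have h3 : HasDerivAt (fun t : ℝ => v⁻¹ * f (p + t • v)) (v⁻¹ * L v) 0 :=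
    h2.const_mul v⁻¹
  have h4 := hasDerivAt_iff_tendsto_slope.mp h3
  refine h4.congr fun t => ?_
  rw [slope_def_module]
  simp only [sub_zero, zero_smul, add_zero]
  rw [smul_inv₀, smul_mul_assoc, mul_sub]


open Filter Asymptotics Topology in
/-- A real differentiable function on an open set `Ω ⊆ ℍ` is left slice hyperholomorphic
(i.e. satisfies `(∂/∂x + I ∂/∂y) f_I = 0` on every slice) if and only if it admits a left
slice derivative at every point of `Ω`. -/
theorem sliceHyperholomorphic_iff_admitsSliceDeriv
    (Ω : Set ℍ) (hΩ : IsOpen Ω) (f : ℍ → ℍ) (hf : DifferentiableOn ℝ f Ω) :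
    (∀ I : ℍ, I ^ 2 = -1 → ∀ p ∈ Ω ∩ slicePlane I,
        fderiv ℝ f p 1 + I * fderiv ℝ f p I = 0) ↔
    (∀ p₀ ∈ Ω, AdmitsSliceDerivAt f p₀) := by
  constructor
  · intro h p₀ hp₀
    have hL : HasFDerivAt f (fderiv ℝ f p₀) p₀ :=
      (hf.differentiableAt (hΩ.mem_nhds hp₀)).hasFDerivAt
    set L := fderiv ℝ f p₀ with hLdef
    refine ⟨L 1, ?_⟩
    intro I hI hpI
    have hcr : L 1 + I * L I = 0 := h I hI p₀ ⟨hp₀, hpI⟩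
    have hLI : L I = I * L 1 := by
      have h1 : L 1 = -(I * L I) := eq_neg_of_add_eq_zero_left hcr
      rw [h1, mul_neg, ← mul_assoc, ← pow_two, hI]
      simp
    have key : ∀ p ∈ slicePlane I, L (p - p₀) = (p - p₀) * L 1 := by
      rintro p ⟨x, y, rfl⟩
      obtain ⟨x₀, y₀, rfl⟩ := hpI
      have e : ((x:ℍ) + (y:ℍ) * I) - ((x₀:ℍ) + (y₀:ℍ) * I)
          = (x - x₀) • (1:ℍ) + (y - y₀) • I := by
        rw [← Quaternion.coe_mul_eq_smul, ← Quaternion.coe_mul_eq_smul]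
        push_cast
        noncomm_ring
      rw [e, map_add, map_smul, map_smul, hLI, add_mul, smul_mul_assoc,
        smul_mul_assoc, one_mul]
    have hlo := hL.isLittleO
    have h0 : Tendsto (fun p => (p - p₀)⁻¹ * (f p - f p₀ - L (p - p₀)))
        (nhdsWithin p₀ (slicePlane I \ {p₀})) (nhds 0) := by
      have hdiv := (hlo.mono nhdsWithin_le_nhds
        (l := nhdsWithin p₀ (slicePlane I \ {p₀}))).tendsto_div_nhds_zero
      rw [tendsto_zero_iff_norm_tendsto_zero] at hdiv ⊢
      refine hdiv.congr fun p => ?_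
      rw [norm_div, norm_mul, norm_inv, mul_comm, div_eq_mul_inv]
    have hadd := h0.const_add (L 1)
    rw [add_zero] at hadd
    refine hadd.congr' ?_
    filter_upwards [self_mem_nhdsWithin] with p hp
    obtain ⟨hps, hpne⟩ := hp
    have hne : p - p₀ ≠ 0 := sub_ne_zero.mpr hpne
    rw [key p hps, mul_sub, ← mul_assoc, inv_mul_cancel₀ hne, one_mul]
    abel
  · intro h I hI p hp
    obtain ⟨hpΩ, hpI⟩ := hp
    obtain ⟨d, hd⟩ := h p hpΩ
    have hdI := hd I hI hpI
    have hL : HasFDerivAt f (fderiv ℝ f p) p :=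
      (hf.differentiableAt (hΩ.mem_nhds hpΩ)).hasFDerivAt
    set L := fderiv ℝ f p with hLdef
    have hIne : I ≠ 0 := by
      intro h0
      rw [h0] at hI
      simp at hI
    have hInv : I⁻¹ = -I := by
      refine inv_eq_of_mul_eq_one_left ?_
      rw [neg_mul, ← pow_two, hI, neg_neg]
    have sub : ∀ v : ℍ, v ≠ 0 → (∀ t : ℝ, p + t • v ∈ slicePlane I) →
        d = v⁻¹ * L v := by
      intro v hv hmem
      have limA := aux_slope f L p v hL
      have hmap : Tendsto (fun t : ℝ => p + t • v) (nhdsWithin 0 {(0:ℝ)}ᶜ)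
          (nhdsWithin p (slicePlane I \ {p})) := by
        rw [tendsto_nhdsWithin_iff]
        constructor
        · have hc : Continuous fun t : ℝ => p + t • v := by continuity
          have h0 : Tendsto (fun t : ℝ => p + t • v) (nhdsWithin 0 {(0:ℝ)}ᶜ)
              (nhds (p + (0:ℝ) • v)) :=
            (hc.tendsto 0).mono_left nhdsWithin_le_nhds
          simpa using h0
        · filter_upwards [self_mem_nhdsWithin] with t ht
          refine ⟨hmem t, ?_⟩
          simp only [Set.mem_singleton_iff]
          intro hq
          apply ht
          have h1 : t • v = 0 := by
            have := sub_eq_zero.mpr hq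
            simpa using this
          rcases smul_eq_zero.mp h1 with h | h
          · exact h
          · exact absurd h hv
      have limB := hdI.comp hmap
      have limB' : Tendsto (fun t : ℝ => ((t • v : ℍ))⁻¹ * (f (p + t • v) - f p))
          (nhdsWithin 0 {(0:ℝ)}ᶜ) (nhds d) := by
        refine limB.congr fun t => ?_
        simp [Function.comp]
      exact tendsto_nhds_unique limB' limA
    have hmem1 : ∀ t : ℝ, p + t • (1:ℍ) ∈ slicePlane I := by
      obtain ⟨x, y, rfl⟩ := hpI
      intro t
      exact ⟨x + t, y, by rw [← Quaternion.coe_mul_eq_smul]; push_cast; noncomm_ring⟩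
    have hmemI : ∀ t : ℝ, p + t • I ∈ slicePlane I := by
      obtain ⟨x, y, rfl⟩ := hpI
      intro t
      exact ⟨x, y + t, by rw [← Quaternion.coe_mul_eq_smul]; push_cast; noncomm_ring⟩
    have e1 := sub 1 one_ne_zero hmem1
    have e2 := sub I hIne hmemI
    rw [inv_one, one_mul] at e1
    rw [hInv] at e2
    have : L 1 = -(I * L I) := by rw [← e1, e2, neg_mul]
    rw [this]
    simp
end

section
/- Representation formula (vector-valued): let X be a two-sided quaternionic Banach space, Ω ⊆ ℍ an axially symmetric slice domain, and f : Ω → X slice hyperholomorphic. Then for every point x + Iy ∈ Ω (with x, y ∈ ℝ, I ∈ 𝕊) and every J ∈ 𝕊 one has f(x + Iy) = (1/2)(1 − IJ) f(x + Jy) + (1/2)(1 + IJ) f(x − Jy), where the quaternions (1 ± IJ)/2 act on X by the left module structure. -/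
/-!
Fix `I` and let `σ_I : ℂ → ℂ_I` be `z ↦ Re z + (Im z) I`, an isometry onto the slice `ℂ_I`.
Letting `Complex.I` act on `X` as left multiplication by `I` makes `X` a complex Banach space,
for which `f ∘ σ_I` is holomorphic on `U = σ_I⁻¹(Ω)`: this is the slice Cauchy–Riemann equation.
The right-hand side is holomorphic in `z = x + iy` for the same structure, because
`(1 - IJ)/2` intertwines left multiplication by `J` with that by `I`, and `(1 + IJ)/2` that by
`-J` with that by `I`. Both sides equal `f(x)` on the real axis, and `U` is connected because
`Ω ∩ ℂ_I` is, so the identity theorem gives equality on all of `U`.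
-/

local notation "ℍ" => Quaternion ℝ

/-- `f : Ω → X` is (left) slice hyperholomorphic. -/
def SliceHyperholomorphicOn {X : Type*} [NormedAddCommGroup X] [NormedSpace ℝ X]
    [Module ℍ X] (f : ℍ → X) (Ω : Set ℍ) : Prop :=
  DifferentiableOn ℝ f Ω ∧
    ∀ I : ℍ, I ^ 2 = -1 → ∀ p ∈ Ω ∩ slicePlane I,
      fderiv ℝ f p 1 + I • fderiv ℝ f p I = 0

section Slice

variable {I : ℍ}

theorem Quaternion.liftAux_apply_eq_coe (hI : I * I = -1) (z : ℂ) :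
    Complex.liftAux I hI z = (z.re : ℍ) + (z.im : ℍ) * I := by
  rw [Complex.liftAux_apply, ← coe_mul_eq_smul]
  rfl

theorem Quaternion.normSq_eq_one_of_mul_self_eq_neg_one (hI : I * I = -1) : normSq I = 1 :=
  (pow_eq_one_iff_of_nonneg normSq_nonneg two_ne_zero).1 <| by
    rw [← map_pow, sq, hI, normSq_neg, map_one]

theorem Quaternion.re_eq_zero_of_mul_self_eq_neg_one (hI : I * I = -1) : I.re = 0 := by
  rw [← sq_eq_neg_normSq, normSq_eq_one_of_mul_self_eq_neg_one hI, sq, hI]; simp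

theorem Quaternion.norm_liftAux (hI : I * I = -1) (z : ℂ) : ‖Complex.liftAux I hI z‖ = ‖z‖ := by
  have h : normSq (Complex.liftAux I hI z) = Complex.normSq z := by
    rw [liftAux_apply_eq_coe, normSq_add, coe_mul_eq_smul, normSq_coe, normSq_smul,
      normSq_eq_one_of_mul_self_eq_neg_one hI, star_smul]
    simp [re_eq_zero_of_mul_self_eq_neg_one hI, Complex.normSq_apply, sq]
  rw [norm_eq_sqrt_real_inner, inner_self, h, Complex.norm_def]

theorem Quaternion.isometry_liftAux (hI : I * I = -1) : Isometry (Complex.liftAux I hI) :=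
  AddMonoidHomClass.isometry_of_norm _ (norm_liftAux hI)

theorem Quaternion.range_liftAux (hI : I * I = -1) :
    Set.range (Complex.liftAux I hI) = slicePlane I := by
  ext p
  simp only [Set.mem_range, liftAux_apply_eq_coe, slicePlane]
  exact ⟨fun ⟨z, hz⟩ => ⟨z.re, z.im, hz.symm⟩, fun ⟨x, y, h⟩ => ⟨⟨x, y⟩, h.symm⟩⟩

theorem isPreconnected_preimage_liftAux (hI : I * I = -1) {Ω : Set ℍ}
    (hΩ : IsPreconnected (Ω ∩ slicePlane I)) :
    IsPreconnected (Complex.liftAux I hI ⁻¹' Ω) := by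
  rwa [← (Quaternion.isometry_liftAux hI).isEmbedding.isInducing.isPreconnected_image,
    Set.image_preimage_eq_inter_range, Quaternion.range_liftAux]

end Slice

section DivisionRing

variable {A : Type*} [DivisionRing A] {I J : A}

theorem div_two_mul_eq_of_mul_eq {a : A} (h : a * J = I * a) : a / 2 * J = I * (a / 2) := by
  rw [div_eq_mul_inv, mul_assoc, (Commute.ofNat_left 2 J).inv_left₀.eq, ← mul_assoc, h,
    mul_assoc]

theorem one_sub_mul_div_two_mul (hI : I * I = -1) (hJ : J * J = -1) :
    (1 - I * J) / 2 * J = I * ((1 - I * J) / 2) := by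
  refine div_two_mul_eq_of_mul_eq ?_
  simp only [sub_mul, mul_sub, mul_assoc, hJ, ← mul_assoc I I, hI]
  noncomm_ring

theorem one_add_mul_div_two_mul_neg (hI : I * I = -1) (hJ : J * J = -1) :
    (1 + I * J) / 2 * -J = I * ((1 + I * J) / 2) := by
  refine div_two_mul_eq_of_mul_eq ?_
  simp only [add_mul, mul_add, mul_neg, mul_assoc, hJ, ← mul_assoc I I, hI]
  noncomm_ring

theorem one_sub_div_two_add_one_add_div_two [Algebra ℝ A] (a : A) :
    (1 - a) / 2 + (1 + a) / 2 = 1 := by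
  have : CharZero A := charZero_of_injective_algebraMap (algebraMap ℝ A).injective
  rw [← add_div, sub_add_add_cancel, one_add_one_eq_two, div_self two_ne_zero]

end DivisionRing

section PseudoHolomorphic

variable {X : Type*} [NormedAddCommGroup X] [NormedSpace ℝ X] [Module ℍ X]

def PseudoHolomorphicAt (I : ℍ) (g : ℂ → X) (z : ℂ) : Prop :=
  ∃ D : ℂ →L[ℝ] X, HasFDerivAt g D z ∧ D Complex.I = I • D 1

variable {I J : ℍ} {g g₁ g₂ : ℂ → X} {z : ℂ}

theorem PseudoHolomorphicAt.add (h₁ : PseudoHolomorphicAt I g₁ z)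
    (h₂ : PseudoHolomorphicAt I g₂ z) : PseudoHolomorphicAt I (g₁ + g₂) z := by
  obtain ⟨D₁, hD₁, hD₁I⟩ := h₁
  obtain ⟨D₂, hD₂, hD₂I⟩ := h₂
  exact ⟨D₁ + D₂, hD₁.add hD₂, by simp [hD₁I, hD₂I]⟩

theorem PseudoHolomorphicAt.const_smul [IsScalarTower ℝ ℍ X] [ContinuousConstSMul ℍ X]
    (h : PseudoHolomorphicAt J g z) {c : ℍ} (hc : c * J = I * c) :
    PseudoHolomorphicAt I (c • g) z := by
  obtain ⟨D, hD, hDI⟩ := h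
  exact ⟨c • D, hD.const_smul c, by simp [hDI, smul_smul, hc]⟩

theorem SliceHyperholomorphicOn.pseudoHolomorphicAt {f : ℍ → X} {Ω : Set ℍ}
    (hf : SliceHyperholomorphicOn f Ω) (hΩ : IsOpen Ω) (hI : I * I = -1)
    (hz : Complex.liftAux I hI z ∈ Ω) :
    PseudoHolomorphicAt I (f ∘ Complex.liftAux I hI) z := by
  set σ := Complex.liftAux I hI
  set D := fderiv ℝ f (σ z)
  have hCR : D 1 + I • D I = 0 :=
    hf.2 I (by rw [sq, hI]) (σ z) ⟨hz, Quaternion.range_liftAux hI ▸ Set.mem_range_self z⟩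
  refine ⟨D.comp σ.toLinearMap.toContinuousLinearMap,
    ((hf.1.differentiableAt (hΩ.mem_nhds hz)).hasFDerivAt).comp z
      σ.toLinearMap.toContinuousLinearMap.hasFDerivAt, ?_⟩
  have : D I = I • D 1 := by
    have h := congrArg (I • ·) hCR
    simp only [smul_add, smul_smul, hI, neg_one_smul, smul_zero] at h
    exact (add_neg_eq_zero.mp h).symm
  simpa [σ, Complex.liftAux_apply_I] using this

end PseudoHolomorphic

open Filter Topology in
theorem AnalyticOnNhd.eqOn_of_preconnected_of_eq_ofReal {E : Type*} [NormedAddCommGroup E]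
    [NormedSpace ℂ E] {f g : ℂ → E} {U : Set ℂ} (hf : AnalyticOnNhd ℂ f U)
    (hg : AnalyticOnNhd ℂ g U) (hU : IsPreconnected U) {x₀ : ℝ} (hx₀ : (x₀ : ℂ) ∈ U)
    (hfg : ∀ x : ℝ, f x = g x) : Set.EqOn f g U := by
  have hreal : Tendsto ((↑) : ℝ → ℂ) (𝓝[≠] x₀) (𝓝[≠] (x₀ : ℂ)) :=
    Complex.continuous_ofReal.continuousWithinAt.tendsto_nhdsWithin fun _ _ ↦ by simp_all
  exact hf.eqOn_of_preconnected_of_frequently_eq hg hU hx₀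
    (hreal.frequently (Frequently.of_forall hfg))

section ComplexStructure

variable {X : Type*} [NormedAddCommGroup X] [NormedSpace ℝ X] [Module ℍ X]
  [IsScalarTower ℝ ℍ X] [IsBoundedSMul ℍ X] {I : ℍ}

variable (X) in
noncomputable abbrev NormedSpace.compLiftAux (hI : I * I = -1) : NormedSpace ℂ X :=
  letI := Module.compHom X (Complex.liftAux I hI).toRingHom
  { norm_smul_le c v := (norm_smul_le (Complex.liftAux I hI c) v).trans_eq
      (by rw [Quaternion.norm_liftAux]) }

theorem PseudoHolomorphicAt.differentiableAt {g : ℂ → X} {z : ℂ} (hI : I * I = -1)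
    (h : PseudoHolomorphicAt I g z) :
    letI := NormedSpace.compLiftAux X hI; DifferentiableAt ℂ g z := by
  let := NormedSpace.compLiftAux X hI
  have : IsScalarTower ℝ ℂ X := ⟨fun r c v =>
    show Complex.liftAux I hI (r • c) • v = r • Complex.liftAux I hI c • v by
      rw [map_smul, smul_assoc]⟩
  obtain ⟨D, hD, hDI⟩ := h
  refine (hasFDerivAt_of_restrictScalars ℝ hD
    (f' := (1 : ℂ →L[ℂ] ℂ).smulRight (D 1)) ?_).differentiableAt
  ext w
  change Complex.liftAux I hI w • D 1 = D w
  rw [Complex.liftAux_apply, add_smul, algebraMap_smul, smul_assoc, ← hDI, ← D.map_smul,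
    ← D.map_smul, ← D.map_add]
  congr 1
  apply Complex.ext <;> simp

theorem eqOn_of_pseudoHolomorphicAt_of_eq_ofReal [CompleteSpace X] (hI : I * I = -1)
    {g₁ g₂ : ℂ → X} {U : Set ℂ} (hU : IsOpen U) (hUc : IsPreconnected U) {x₀ : ℝ}
    (hx₀ : (x₀ : ℂ) ∈ U) (h₁ : ∀ z ∈ U, PseudoHolomorphicAt I g₁ z)
    (h₂ : ∀ z ∈ U, PseudoHolomorphicAt I g₂ z) (hreal : ∀ x : ℝ, g₁ x = g₂ x) :
    Set.EqOn g₁ g₂ U := by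
  let := NormedSpace.compLiftAux X hI
  have analytic {g : ℂ → X} (hg : ∀ z ∈ U, PseudoHolomorphicAt I g z) : AnalyticOnNhd ℂ g U :=
    DifferentiableOn.analyticOnNhd
      (fun z hz => ((hg z hz).differentiableAt hI).differentiableWithinAt) hU
  exact (analytic h₁).eqOn_of_preconnected_of_eq_ofReal (analytic h₂) hUc hx₀ hreal

end ComplexStructure

theorem representation_formula_general
    (X : Type*) [NormedAddCommGroup X] [NormedSpace ℝ X] [CompleteSpace X]
    [Module ℍ X] [IsScalarTower ℝ ℍ X]
    [IsBoundedSMul ℍ X]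
    (Ω : Set ℍ) (hΩopen : IsOpen Ω)
    (hΩreal : ∃ x : ℝ, (x : ℍ) ∈ Ω)
    (hΩslice : ∀ I : ℍ, I ^ 2 = -1 → IsConnected (Ω ∩ slicePlane I))
    (hΩax : ∀ (x y : ℝ) (I J : ℍ), I ^ 2 = -1 → J ^ 2 = -1 →
      (x : ℍ) + (y : ℍ) * I ∈ Ω → (x : ℍ) + (y : ℍ) * J ∈ Ω)
    (f : ℍ → X) (hf : SliceHyperholomorphicOn f Ω) :
    ∀ (x y : ℝ) (I J : ℍ), I ^ 2 = -1 → J ^ 2 = -1 →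
      (x : ℍ) + (y : ℍ) * I ∈ Ω →
      f ((x : ℍ) + (y : ℍ) * I) =
        ((1 - I * J) / 2 : ℍ) • f ((x : ℍ) + (y : ℍ) * J) +
        ((1 + I * J) / 2 : ℍ) • f ((x : ℍ) - (y : ℍ) * J) := by
  intro x y I J hI hJ hxy
  have hI' : I * I = -1 := (sq I).symm.trans hI
  have hJ' : J * J = -1 := (sq J).symm.trans hJ
  have hJneg : -J * -J = -1 := by rwa [neg_mul_neg]
  set U := Complex.liftAux I hI' ⁻¹' Ω
  have slice_pseudoHolomorphic {K : ℍ} (hK : K * K = -1) (z : ℂ) (hz : z ∈ U) :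
      PseudoHolomorphicAt K (f ∘ Complex.liftAux K hK) z := by
    refine hf.pseudoHolomorphicAt hΩopen hK ?_
    rw [Set.mem_preimage, Quaternion.liftAux_apply_eq_coe] at hz
    rw [Quaternion.liftAux_apply_eq_coe]
    exact hΩax _ _ I K hI ((sq K).trans hK) hz
  obtain ⟨x₀, hx₀⟩ := hΩreal
  have key : Set.EqOn (f ∘ Complex.liftAux I hI')
      (((1 - I * J) / 2 : ℍ) • (f ∘ Complex.liftAux J hJ') +
        ((1 + I * J) / 2 : ℍ) • (f ∘ Complex.liftAux (-J) hJneg)) U := by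
    refine eqOn_of_pseudoHolomorphicAt_of_eq_ofReal hI'
      (hΩopen.preimage (Quaternion.isometry_liftAux hI').continuous)
      (isPreconnected_preimage_liftAux hI' (hΩslice I hI).isPreconnected)
      (by simpa [U] using hx₀) (slice_pseudoHolomorphic hI')
      (fun z hz => ((slice_pseudoHolomorphic hJ' z hz).const_smul
        (one_sub_mul_div_two_mul hI' hJ')).add ((slice_pseudoHolomorphic hJneg z hz).const_smul
          (one_add_mul_div_two_mul_neg hI' hJ'))) fun r => ?_
    simp [← add_smul, one_sub_div_two_add_one_add_div_two]
  have := @key ⟨x, y⟩ (by rwa [Set.mem_preimage, Quaternion.liftAux_apply_eq_coe])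
  simpa only [Function.comp_apply, Pi.add_apply, Pi.smul_apply, Quaternion.liftAux_apply_eq_coe,
    mul_neg, ← sub_eq_add_neg] using this

/-- Representation formula for slice hyperholomorphic functions with values in a
two-sided quaternionic Banach space, on an axially symmetric slice domain:
`f(x + Iy) = ½(1 − IJ) f(x + Jy) + ½(1 + IJ) f(x − Jy)` for all `I, J ∈ 𝕊`. -/
theorem representation_formula
    (X : Type*) [NormedAddCommGroup X] [NormedSpace ℝ X] [CompleteSpace X]
    [Module ℍ X] [Module ℍᵐᵒᵖ X] [IsScalarTower ℝ ℍ X] [IsScalarTower ℝ ℍᵐᵒᵖ X]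
    [SMulCommClass ℍ ℍᵐᵒᵖ X] [IsBoundedSMul ℍ X] [IsBoundedSMul ℍᵐᵒᵖ X]
    (Ω : Set ℍ) (hΩopen : IsOpen Ω) (hΩconn : IsConnected Ω)
    (hΩreal : ∃ x : ℝ, (x : ℍ) ∈ Ω)
    (hΩslice : ∀ I : ℍ, I ^ 2 = -1 → IsConnected (Ω ∩ slicePlane I))
    (hΩax : ∀ (x y : ℝ) (I J : ℍ), I ^ 2 = -1 → J ^ 2 = -1 →
      (x : ℍ) + (y : ℍ) * I ∈ Ω → (x : ℍ) + (y : ℍ) * J ∈ Ω)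
    (f : ℍ → X) (hf : SliceHyperholomorphicOn f Ω) :
    ∀ (x y : ℝ) (I J : ℍ), I ^ 2 = -1 → J ^ 2 = -1 →
      (x : ℍ) + (y : ℍ) * I ∈ Ω →
      f ((x : ℍ) + (y : ℍ) * I) =
        ((1 - I * J) / 2 : ℍ) • f ((x : ℍ) + (y : ℍ) * J) +
        ((1 + I * J) / 2 : ℍ) • f ((x : ℍ) - (y : ℍ) * J) :=
  representation_formula_general X Ω hΩopen hΩreal hΩslice hΩax f hf
end

section
/- Let P be a right quaternionic Banach space, Q a two-sided quaternionic Banach space, A : P → P a bounded right-linear operator and G : P → Q a bounded right-linear operator. For every p ∈ ℍ with |p|·‖A‖ < 1, the series Σ_{n≥0} pⁿ (G ∘ Aⁿ) (where pⁿ acts on Q by left scalar multiplication) converges absolutely in operator norm, and (Σ_{n≥0} pⁿ G Aⁿ) ∘ (I − 2 Re(p) A + |p|² A²) = G − p̄ (G ∘ A). In particular, if the operator I − 2 Re(p) A + |p|² A² is invertible with bounded inverse, then Σ_{n≥0} pⁿ G Aⁿ = (G − p̄ G A)(I − 2 Re(p) A + |p|² A²)⁻¹. -/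
local notation "ℍ" => Quaternion ℝ

/-!
Summability is a comparison with the geometric series `Σ (‖p‖‖A‖)ⁿ`. Writing
`F v = Σ pⁿ G (Aⁿ v)`, splitting off the first term gives `F v = G v + p F (A v)`. Since
`2 Re p = p + p̄` and `|p|² = p̄ p`, the real quadratic `1 - 2 Re(p) A + |p|² A²` acts like the
product `(1 - p̄ A)(1 - p A)`, so applying this shift relation twice telescopes
`F (v - 2 Re(p) A v + |p|² A² v)` to `G v - p̄ G (A v)`.
-/

open ContinuousLinearMap

section PowSeries

variable {𝕜 R E F : Type*} [NontriviallyNormedField 𝕜]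
  [NormedAddCommGroup E] [NormedSpace 𝕜 E] [NormedAddCommGroup F] [NormedSpace 𝕜 F]

theorem ContinuousLinearMap.norm_comp_pow_le (G : E →L[𝕜] F) (A : E →L[𝕜] E) (n : ℕ) :
    ‖G.comp (A ^ n)‖ ≤ ‖G‖ * ‖A‖ ^ n := by
  induction n with
  | zero => simp [one_def]
  | succ n ih =>
    calc ‖G.comp (A ^ (n + 1))‖ = ‖(G.comp (A ^ n)).comp A‖ := by
          rw [pow_succ, mul_def, comp_assoc]
      _ ≤ ‖G.comp (A ^ n)‖ * ‖A‖ := opNorm_comp_le _ _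
      _ ≤ ‖G‖ * ‖A‖ ^ n * ‖A‖ := by gcongr
      _ = ‖G‖ * ‖A‖ ^ (n + 1) := by rw [pow_succ, mul_assoc]

theorem ContinuousLinearMap.summable_pow_mul_norm_comp_pow (G : E →L[𝕜] F) (A : E →L[𝕜] E)
    {r : ℝ} (hr : 0 ≤ r) (hrA : r * ‖A‖ < 1) :
    Summable fun n => r ^ n * ‖G.comp (A ^ n)‖ := by
  refine ((summable_geometric_of_lt_one (by positivity) hrA).mul_left ‖G‖).of_nonneg_of_le
    (fun n => by positivity) fun n => ?_
  calc r ^ n * ‖G.comp (A ^ n)‖ ≤ r ^ n * (‖G‖ * ‖A‖ ^ n) := by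
        gcongr; exact G.norm_comp_pow_le A n
    _ = ‖G‖ * (r * ‖A‖) ^ n := by ring

variable [NormedRing R] [NormOneClass R] [Module R F] [IsBoundedSMul R F] [CompleteSpace F]

theorem ContinuousLinearMap.summable_pow_smul_apply_pow (G : E →L[𝕜] F) (A : E →L[𝕜] E)
    {p : R} (hp : ‖p‖ * ‖A‖ < 1) (v : E) :
    Summable fun n => p ^ n • G ((A ^ n) v) := by
  refine ((G.summable_pow_mul_norm_comp_pow A (norm_nonneg p) hp).mul_right ‖v‖).of_norm_bounded
    fun n => ?_
  calc ‖p ^ n • G ((A ^ n) v)‖ ≤ ‖p ^ n‖ * ‖G.comp (A ^ n) v‖ := norm_smul_le _ _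
    _ ≤ ‖p‖ ^ n * (‖G.comp (A ^ n)‖ * ‖v‖) := by
        gcongr
        · exact norm_pow_le p n
        · exact le_opNorm _ v
    _ = ‖p‖ ^ n * ‖G.comp (A ^ n)‖ * ‖v‖ := (mul_assoc _ _ _).symm

variable [SMulCommClass 𝕜 R F]

noncomputable def ContinuousLinearMap.smulPowSeries (G : E →L[𝕜] F) (A : E →L[𝕜] E) {p : R}
    (hp : ‖p‖ * ‖A‖ < 1) : E →ₗ[𝕜] F where
  toFun v := ∑' n, p ^ n • G ((A ^ n) v)
  map_add' v w := by
    simp only [map_add, smul_add]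
    exact (G.summable_pow_smul_apply_pow A hp v).tsum_add (G.summable_pow_smul_apply_pow A hp w)
  map_smul' c v := by
    rw [RingHom.id_apply, ← (G.summable_pow_smul_apply_pow A hp v).tsum_const_smul c]
    exact tsum_congr fun n => by rw [map_smul, map_smul, smul_comm c]

theorem ContinuousLinearMap.smulPowSeries_apply (G : E →L[𝕜] F) (A : E →L[𝕜] E) {p : R}
    (hp : ‖p‖ * ‖A‖ < 1) (v : E) :
    G.smulPowSeries A hp v = ∑' n, p ^ n • G ((A ^ n) v) :=
  rfl

theorem ContinuousLinearMap.smulPowSeries_eq_add_smul (G : E →L[𝕜] F) (A : E →L[𝕜] E) {p : R}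
    (hp : ‖p‖ * ‖A‖ < 1) (v : E) :
    G.smulPowSeries A hp v = G v + p • G.smulPowSeries A hp (A v) := by
  simp only [smulPowSeries_apply]
  rw [(G.summable_pow_smul_apply_pow A hp v).tsum_eq_zero_add,
    ← (G.summable_pow_smul_apply_pow A hp (A v)).tsum_const_smul]
  congr 1
  · rw [pow_zero, pow_zero, one_smul, one_apply_eq_self]
  · exact tsum_congr fun n => by rw [pow_succ', pow_succ, mul_smul, mul_apply_eq_comp]

end PowSeries

theorem Quaternion.sub_two_re_smul_add_normSq_smul {Q : Type*} [AddCommGroup Q] [Module ℍ Q]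
    [Module ℝ Q] [IsScalarTower ℝ ℍ Q] (p : ℍ) {x y z a b : Q}
    (hy : p • y = x - a) (hz : p • z = y - b) :
    x - (2 * p.re) • y + Quaternion.normSq p • z = a - star p • b := by
  have hre : algebraMap ℝ ℍ (2 * p.re) = p + star p := (Quaternion.self_add_star' p).symm
  have hnormSq : algebraMap ℝ ℍ (Quaternion.normSq p) = star p * p :=
    (Quaternion.star_mul_self p).symm
  rw [← algebraMap_smul ℍ (2 * p.re), ← algebraMap_smul ℍ (Quaternion.normSq p), hre, hnormSq,
    add_smul, mul_smul, hy, hz, smul_sub]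
  abel

theorem ContinuousLinearMap.tsum_pow_smul_apply_pow_quadratic {P Q : Type*}
    [NormedAddCommGroup P] [NormedSpace ℝ P] [NormedAddCommGroup Q] [NormedSpace ℝ Q]
    [CompleteSpace Q] [Module ℍ Q] [IsScalarTower ℝ ℍ Q] [IsBoundedSMul ℍ Q]
    (G : P →L[ℝ] Q) (A : P →L[ℝ] P) {p : ℍ} (hp : ‖p‖ * ‖A‖ < 1) (v : P) :
    ∑' n, p ^ n • G ((A ^ n)
        (((1 : P →L[ℝ] P) - (2 * p.re) • A + Quaternion.normSq p • A ^ 2) v)) =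
      G v - star p • G (A v) := by
  have hshift := G.smulPowSeries_eq_add_smul A hp
  rw [← smulPowSeries_apply G A hp]
  simp only [add_apply, sub_apply, smul_apply, one_apply_eq_self, sq, mul_apply_eq_comp, map_add,
    map_sub, map_smul]
  exact Quaternion.sub_two_re_smul_add_normSq_smul p (by rw [hshift v]; abel)
    (by rw [hshift (A v)]; abel)

open MulOpposite in
theorem series_slice_extension_general
    (P Q : Type*)
    [NormedAddCommGroup P] [NormedSpace ℝ P]
    [NormedAddCommGroup Q] [NormedSpace ℝ Q] [CompleteSpace Q]
    [Module ℍ Q] [IsScalarTower ℝ ℍ Q]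
    [IsBoundedSMul ℍ Q]
    (A : P →L[ℝ] P) (G : P →L[ℝ] Q)
    (p : ℍ) (hp : ‖p‖ * ‖A‖ < 1) :
    Summable (fun n : ℕ => ‖p‖ ^ n * ‖G.comp (A ^ n)‖) ∧
    (∀ v : P, Summable (fun n : ℕ => p ^ n • G ((A ^ n) v))) ∧
    (∀ v : P,
      (∑' n : ℕ, p ^ n • G ((A ^ n)
          (((1 : P →L[ℝ] P) - (2 * p.re) • A + (Quaternion.normSq p) • (A ^ 2)) v)))
        = G v - (star p) • G (A v)) ∧
    (∀ B : P →L[ℝ] P,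
      ((1 : P →L[ℝ] P) - (2 * p.re) • A + (Quaternion.normSq p) • (A ^ 2)).comp B = 1 →
      B.comp ((1 : P →L[ℝ] P) - (2 * p.re) • A + (Quaternion.normSq p) • (A ^ 2)) = 1 →
      ∀ v : P, (∑' n : ℕ, p ^ n • G ((A ^ n) v))
        = G (B v) - (star p) • G (A (B v))) := by
  refine ⟨G.summable_pow_mul_norm_comp_pow A (norm_nonneg p) hp,
    G.summable_pow_smul_apply_pow A hp, G.tsum_pow_smul_apply_pow_quadratic A hp, ?_⟩
  intro B hB _ v
  have hBv := DFunLike.congr_fun hB v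
  rw [comp_apply, one_apply_eq_self] at hBv
  rw [← G.tsum_pow_smul_apply_pow_quadratic A hp (B v), hBv]

open MulOpposite in
/-- Power series expansion of the slice hyperholomorphic extension of `G (I - xA)⁻¹`:
for `|p|‖A‖ < 1` the series `Σ pⁿ (G ∘ Aⁿ)` converges absolutely in operator norm,
pointwise on `P`, and `(Σ pⁿ G Aⁿ)(I − 2 Re(p) A + |p|² A²) = G − p̄ G A`; hence if
`I − 2 Re(p) A + |p|² A²` is boundedly invertible, `Σ pⁿ G Aⁿ = (G − p̄ G A)(I − 2 Re(p) A + |p|² A²)⁻¹`. -/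
theorem series_slice_extension
    (P Q : Type*)
    [NormedAddCommGroup P] [NormedSpace ℝ P] [CompleteSpace P]
    [Module ℍᵐᵒᵖ P] [IsBoundedSMul ℍᵐᵒᵖ P]
    [NormedAddCommGroup Q] [NormedSpace ℝ Q] [CompleteSpace Q]
    [Module ℍ Q] [Module ℍᵐᵒᵖ Q] [IsScalarTower ℝ ℍ Q] [SMulCommClass ℍ ℍᵐᵒᵖ Q]
    [IsBoundedSMul ℍ Q] [IsBoundedSMul ℍᵐᵒᵖ Q]
    (A : P →L[ℝ] P) (G : P →L[ℝ] Q)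
    (hA : ∀ (q : ℍ) (v : P), A (op q • v) = op q • A v)
    (hG : ∀ (q : ℍ) (v : P), G (op q • v) = op q • G v)
    (p : ℍ) (hp : ‖p‖ * ‖A‖ < 1) :
    Summable (fun n : ℕ => ‖p‖ ^ n * ‖G.comp (A ^ n)‖) ∧
    (∀ v : P, Summable (fun n : ℕ => p ^ n • G ((A ^ n) v))) ∧
    (∀ v : P,
      (∑' n : ℕ, p ^ n • G ((A ^ n)
          (((1 : P →L[ℝ] P) - (2 * p.re) • A + (Quaternion.normSq p) • (A ^ 2)) v)))
        = G v - (star p) • G (A v)) ∧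
    (∀ B : P →L[ℝ] P,
      ((1 : P →L[ℝ] P) - (2 * p.re) • A + (Quaternion.normSq p) • (A ^ 2)).comp B = 1 →
      B.comp ((1 : P →L[ℝ] P) - (2 * p.re) • A + (Quaternion.normSq p) • (A ^ 2)) = 1 →
      ∀ v : P, (∑' n : ℕ, p ^ n • G ((A ^ n) v))
        = G (B v) - (star p) • G (A (B v))) :=
  series_slice_extension_general P Q A G p hp
end

section
/- For p, q ∈ ℍ such that p does not lie on the 2-sphere [−q] (i.e. it is not the case that Re p = −Re q and |Im p| = |Im q|), the quaternions |p|² + 2 Re(p) q̄ + q̄² and |q|² + 2 Re(q) p + p² are nonzero and (p̄ + q̄)(|p|² + 2 Re(p) q̄ + q̄²)⁻¹ = (|q|² + 2 Re(q) p + p²)⁻¹ (p + q). -/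
local notation "ℍ" => Quaternion ℝ

/-!
Both denominators are values of a real quadratic `X² + 2 Re(y) X + |y|² = (X + Re y)² + |Im y|²`.
It vanishes at `x` only if `(x + Re y)² = -|Im y|²`, which forces `x + Re y` to be purely imaginary
of norm `|Im y|`, i.e. `x ∈ [−y]`. With `A` and `B` the two denominators, the equality of the
kernel expressions is the cross-multiplied identity `A (p̄ + q̄) = (p + q) B`, checked componentwise.
-/

theorem Quaternion.re_eq_zero_and_norm_im_eq_of_sq_eq_neg_sq {s : ℍ} {c : ℝ} (hc : 0 ≤ c)
    (h : s ^ 2 = -((c ^ 2 : ℝ) : ℍ)) : s.re = 0 ∧ ‖s.im‖ = c := by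
  have hnorm : ‖s‖ = c := by
    have := congrArg norm h
    rw [norm_pow, norm_neg, norm_coe, Real.norm_of_nonneg (sq_nonneg c)] at this
    exact (pow_left_inj₀ (norm_nonneg s) hc two_ne_zero).mp this
  have hre : s.re = 0 := by
    rw [← sq_eq_neg_normSq, normSq_eq_norm_mul_self, hnorm, ← sq, h]
  refine ⟨hre, ?_⟩
  rw [← hnorm, ← re_add_im s, hre]
  simp

-- `QuaternionAlgebra.coe_ofNat` does not match numerals of `ℍ` syntactically.
theorem Quaternion.coe_two : ((2 : ℝ) : ℍ) = 2 := rfl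

/-- The real quadratic `X² + 2 Re(y) X + |y|²`, whose zero set is the sphere `[−y]`, at `x`. -/
noncomputable def Quaternion.sphereQuadratic (x y : ℍ) : ℍ :=
  ((normSq y : ℝ) : ℍ) + 2 * (y.re : ℍ) * x + x ^ 2

theorem Quaternion.sphereQuadratic_eq (x y : ℍ) :
    sphereQuadratic x y = (x + y.re) ^ 2 + ((‖y.im‖ ^ 2 : ℝ) : ℍ) := by
  rw [sphereQuadratic, sq ‖y.im‖, ← normSq_eq_norm_mul_self, ← coe_two]
  ext <;>
    simp only [normSq_def', pow_two, re_add, imI_add, imJ_add, imK_add, re_mul, imI_mul, imJ_mul,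
      imK_mul, re_coe, imI_coe, imJ_coe, imK_coe, re_im, imI_im, imJ_im, imK_im] <;>
    ring

theorem Quaternion.re_eq_neg_and_norm_im_eq_of_sphereQuadratic_eq_zero {x y : ℍ}
    (h : sphereQuadratic x y = 0) : x.re = -y.re ∧ ‖x.im‖ = ‖y.im‖ := by
  rw [sphereQuadratic_eq, add_eq_zero_iff_eq_neg] at h
  obtain ⟨hre, him⟩ := re_eq_zero_and_norm_im_eq_of_sq_eq_neg_sq (norm_nonneg _) h
  simp only [re_add, re_coe, im_add, im_coe, add_zero] at hre him
  exact ⟨eq_neg_of_add_eq_zero_left hre, him⟩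

theorem Quaternion.sphereQuadratic_mul_star_add (p q : ℍ) :
    sphereQuadratic p q * (star p + star q) = (p + q) * sphereQuadratic (star q) p := by
  rw [sphereQuadratic, sphereQuadratic, ← coe_two]
  ext <;>
    simp only [normSq_def', pow_two, re_add, imI_add, imJ_add, imK_add, re_mul, imI_mul, imJ_mul,
      imK_mul, re_coe, imI_coe, imJ_coe, imK_coe, re_star, imI_star, imJ_star, imK_star] <;>
    ring

/-- The two expressions for the reproducing kernel `k(p, q)` of the Hardy space of the
half-space: for `p` not on the sphere `[−q]`, the quaternions
`|p|² + 2 Re(p) q̄ + q̄²` and `|q|² + 2 Re(q) p + p²` are nonzero and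
`(p̄ + q̄)(|p|² + 2 Re(p) q̄ + q̄²)⁻¹ = (|q|² + 2 Re(q) p + p²)⁻¹ (p + q)`. -/
theorem hardy_kernel_two_expressions (p q : ℍ)
    (h : ¬(p.re = -q.re ∧ ‖p.im‖ = ‖q.im‖)) :
    ((Quaternion.normSq p : ℝ) : ℍ) + 2 * (p.re : ℍ) * star q + (star q) ^ 2 ≠ 0 ∧
    ((Quaternion.normSq q : ℝ) : ℍ) + 2 * (q.re : ℍ) * p + p ^ 2 ≠ 0 ∧
    (star p + star q) *
        (((Quaternion.normSq p : ℝ) : ℍ) + 2 * (p.re : ℍ) * star q + (star q) ^ 2)⁻¹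
      = (((Quaternion.normSq q : ℝ) : ℍ) + 2 * (q.re : ℍ) * p + p ^ 2)⁻¹ * (p + q) := by
  show (star q).sphereQuadratic p ≠ 0 ∧ p.sphereQuadratic q ≠ 0 ∧
    (star p + star q) * ((star q).sphereQuadratic p)⁻¹ = (p.sphereQuadratic q)⁻¹ * (p + q)
  have hB : (star q).sphereQuadratic p ≠ 0 := fun h0 => by
    obtain ⟨hre, him⟩ := Quaternion.re_eq_neg_and_norm_im_eq_of_sphereQuadratic_eq_zero h0
    rw [Quaternion.re_star] at hre
    rw [Quaternion.im_star, norm_neg] at him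
    exact h ⟨by linarith, him.symm⟩
  have hA : p.sphereQuadratic q ≠ 0 := fun h0 =>
    h (Quaternion.re_eq_neg_and_norm_im_eq_of_sphereQuadratic_eq_zero h0)
  refine ⟨hB, hA, ?_⟩
  rw [mul_inv_eq_iff_eq_mul₀ hB, mul_assoc, eq_inv_mul_iff_mul_eq₀ hA]
  exact Quaternion.sphereQuadratic_mul_star_add p q
end

section
/- For p, q ∈ ℍ with p not on the 2-sphere [−q] (i.e. it is not the case that Re p = −Re q and |Im p| = |Im q|), set k(p, q) = (p̄ + q̄)(|p|² + 2 Re(p) q̄ + q̄²)⁻¹. Then p · k(p, q) + k(p, q) · q̄ = 1. -/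
local notation "ℍ" => Quaternion ℝ

/-!
The denominator `D = |p|² + 2 Re(p) q̄ + q̄²` is the real quadratic `x² + 2 Re(p) x + |p|²`
evaluated at `x = q̄`, so it commutes with `q̄`; and since `p + p̄ = 2 Re p`, the numerator
`N = p̄ + q̄` satisfies `p N + N q̄ = D`. Hence `p (N D⁻¹) + (N D⁻¹) q̄ = (p N + N q̄) D⁻¹ = 1`.
Writing `D = (q̄ + Re p)² + |Im p|²`, a quaternion square equals the nonpositive real `-|Im p|²`
only if it is purely imaginary of norm `|Im p|`, so `D ≠ 0` unless `p ∈ [−q]`.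
-/

open Quaternion (normSq normSq_def' normSq_coe normSq_neg normSq_nonneg normSq_eq_norm_mul_self
  sq_eq_neg_normSq coe_commute self_add_star' self_mul_star re_add re_coe re_star im_add im_coe)

theorem mul_mul_inv_add_mul_inv_mul_eq_one {K : Type*} [DivisionRing K] {a b c d : K}
    (hd : d ≠ 0) (hcd : Commute c d) (h : a * b + b * c = d) :
    a * (b * d⁻¹) + b * d⁻¹ * c = 1 := by
  rw [mul_assoc b, ← hcd.inv_right₀.eq, ← mul_assoc, ← mul_assoc, ← add_mul, h,
    mul_inv_cancel₀ hd]

theorem Quaternion.normSq_eq_re_sq_add_normSq_im (a : ℍ) :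
    normSq a = a.re ^ 2 + normSq a.im := by
  simp only [normSq_def', re_im, imI_im, imJ_im, imK_im]
  ring

theorem Quaternion.re_eq_zero_and_normSq_im_eq_of_sq_add_coe_eq_zero {y : ℍ} {r : ℝ}
    (hr : 0 ≤ r) (h : y ^ 2 + r = 0) : y.re = 0 ∧ normSq y.im = r := by
  have hsq : y ^ 2 = -(r : ℍ) := eq_neg_of_add_eq_zero_left h
  have hnorm : normSq y = r := by
    have : normSq y ^ 2 = r ^ 2 := by rw [← map_pow, hsq, normSq_neg, normSq_coe]
    exact (pow_left_inj₀ normSq_nonneg hr two_ne_zero).mp this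
  have hre : y.re = 0 := sq_eq_neg_normSq.mp (by rw [hsq, hnorm])
  refine ⟨hre, ?_⟩
  rw [← hnorm, normSq_eq_re_sq_add_normSq_im y, hre]
  ring

theorem Quaternion.coe_normSq_add_two_re_mul_add_sq (a x : ℍ) :
    ((normSq a : ℝ) : ℍ) + 2 * (a.re : ℍ) * x + x ^ 2 =
      (x + a.re) ^ 2 + ((normSq a.im : ℝ) : ℍ) := by
  rw [normSq_eq_re_sq_add_normSq_im, add_comm x, (coe_commute a.re x).add_sq]
  push_cast
  abel

theorem Quaternion.mul_star_add_add_star_add_mul (a x : ℍ) :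
    a * (star a + x) + (star a + x) * x =
      ((normSq a : ℝ) : ℍ) + 2 * (a.re : ℍ) * x + x ^ 2 := by
  have hre : a + star a = 2 * (a.re : ℍ) := by rw [self_add_star']; push_cast; rfl
  rw [← self_mul_star, ← hre]
  noncomm_ring

theorem Quaternion.commute_self_add_coe_sq_add_coe (x : ℍ) (r s : ℝ) :
    Commute x ((x + r) ^ 2 + s) :=
  (((Commute.refl x).add_right (coe_commute r x).symm).pow_right 2).add_right
    (coe_commute s x).symm

theorem Quaternion.coe_normSq_add_two_re_mul_add_sq_ne_zero {a x : ℍ}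
    (h : ¬(x.re = -a.re ∧ ‖x.im‖ = ‖a.im‖)) :
    ((normSq a : ℝ) : ℍ) + 2 * (a.re : ℍ) * x + x ^ 2 ≠ 0 := by
  rw [coe_normSq_add_two_re_mul_add_sq]
  intro hzero
  obtain ⟨hre, hnormSq⟩ := re_eq_zero_and_normSq_im_eq_of_sq_add_coe_eq_zero normSq_nonneg hzero
  refine h ⟨by simp only [re_add, re_coe] at hre; linarith, ?_⟩
  simp only [im_add, im_coe, add_zero, normSq_eq_norm_mul_self] at hnormSq
  exact mul_self_inj (norm_nonneg _) (norm_nonneg _) |>.mp hnormSq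

/-- The reproducing kernel `k(p, q) = (p̄ + q̄)(|p|² + 2 Re(p) q̄ + q̄²)⁻¹` of the Hardy
space of the half-space `ℍ₊` satisfies `p k(p, q) + k(p, q) q̄ = 1` whenever `p` is not on
the sphere `[−q]`. -/
theorem hardy_kernel_identity (p q : ℍ)
    (h : ¬(p.re = -q.re ∧ ‖p.im‖ = ‖q.im‖)) :
    p * ((star p + star q) *
          (((Quaternion.normSq p : ℝ) : ℍ) + 2 * (p.re : ℍ) * star q + (star q) ^ 2)⁻¹) +
      ((star p + star q) *
          (((Quaternion.normSq p : ℝ) : ℍ) + 2 * (p.re : ℍ) * star q + (star q) ^ 2)⁻¹) *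
        star q = 1 := by
  refine mul_mul_inv_add_mul_inv_mul_eq_one ?_ ?_
    (Quaternion.mul_star_add_add_star_add_mul p (star q))
  · refine Quaternion.coe_normSq_add_two_re_mul_add_sq_ne_zero fun ⟨hre, hnorm⟩ => h ⟨?_, ?_⟩
    · rw [re_star] at hre
      linarith
    · simpa using hnorm.symm
  · rw [Quaternion.coe_normSq_add_two_re_mul_add_sq]
    exact Quaternion.commute_self_add_coe_sq_add_coe _ _ _
end

section
/- Let a ∈ ℍ with Re a > 0 and let p ∈ ℍ not lying on the 2-sphere [−a] (i.e. it is not the case that Re p = −Re a and |Im p| = |Im a|). Then p² + 2 Re(a) p + |a|² ≠ 0, p + a ≠ 0, and, setting p̃ = (p + a)⁻¹ p (p + a), one has p̃ + ā ≠ 0 and (p² + 2 Re(a) p + |a|²)⁻¹ (p² − a²) = (p̃ + ā)⁻¹ (p̃ − a) = 1 − 2 Re(a) (p̃ + ā)⁻¹. -/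
local notation "ℍ" => Quaternion ℝ

/-!
The real polynomial `Q(p) = p² + 2 Re(a) p + |a|² = (p + Re a)² + |Im a|²` vanishes exactly on the
sphere `[−a]`, and it factors as `Q(p) = p (p + a) + (p + a) ā`. Conjugating by `p + a` therefore
gives `p̃ + ā = (p + a)⁻¹ Q(p)` and `p̃ − a = (p + a)⁻¹ (p² − a²)`, from which both formulas follow;
the last one because `p̃ − a = (p̃ + ā) − 2 Re a` with `2 Re a` real, hence central.
-/

theorem inv_mul_mul_add_eq_inv_mul {D : Type*} [DivisionRing D] {u : D} (hu : u ≠ 0) (x y : D) :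
    u⁻¹ * x * u + y = u⁻¹ * (x * u + u * y) := by
  rw [mul_add, mul_assoc, inv_mul_cancel_left₀ hu]

namespace Quaternion

theorem commute_two_mul_coe (r : ℝ) (x : ℍ[ℝ]) : Commute (2 * (r : ℍ[ℝ])) x :=
  (Commute.ofNat_left 2 x).mul_left (coe_commute r x)

theorem normSq_eq_re_sq_add_normSq_im_s11 (a : ℍ[ℝ]) : normSq a = a.re ^ 2 + normSq a.im := by
  simp only [normSq_def', re_im, imI_im, imJ_im, imK_im]
  ring

theorem normSq_eq_normSq_iff_norm_eq (q b : ℍ[ℝ]) : normSq q = normSq b ↔ ‖q‖ = ‖b‖ := by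
  rw [normSq_eq_norm_mul_self, normSq_eq_norm_mul_self]
  exact mul_self_inj (norm_nonneg q) (norm_nonneg b)

theorem sq_eq_neg_normSq_iff (q b : ℍ[ℝ]) :
    q ^ 2 = -((normSq b : ℝ) : ℍ[ℝ]) ↔ q.re = 0 ∧ ‖q.im‖ = ‖b‖ := by
  constructor
  · intro h
    have hnormSq : normSq q = normSq b := by
      have : normSq q ^ 2 = normSq b ^ 2 := by rw [← map_pow, h, normSq_neg, normSq_coe]
      exact (pow_left_inj₀ normSq_nonneg normSq_nonneg two_ne_zero).mp this
    have hre : q.re = 0 := sq_eq_neg_normSq.mp (by rw [h, hnormSq])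
    refine ⟨hre, (normSq_eq_normSq_iff_norm_eq _ _).mp ?_⟩
    rw [← hnormSq, normSq_eq_re_sq_add_normSq_im_s11 q, hre]
    ring
  · rintro ⟨hre, him⟩
    rw [← re_add_im q, hre, coe_zero, zero_add, im_sq,
      (normSq_eq_normSq_iff_norm_eq _ _).mpr him]

theorem sq_add_two_re_mul_add_normSq_eq (a p : ℍ[ℝ]) :
    p ^ 2 + 2 * (a.re : ℍ[ℝ]) * p + ((normSq a : ℝ) : ℍ[ℝ]) = p * (p + a) + (p + a) * star a :=
  calc p ^ 2 + 2 * (a.re : ℍ[ℝ]) * p + ((normSq a : ℝ) : ℍ[ℝ])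
      = p ^ 2 + p * (2 * a.re) + a * star a := by
        rw [self_mul_star, (commute_two_mul_coe a.re p).eq]
    _ = p * (p + a) + (p + a) * star a := by
        rw [← self_add_star]
        noncomm_ring

theorem sq_add_two_re_mul_add_normSq_eq_zero_iff (a p : ℍ[ℝ]) :
    p ^ 2 + 2 * (a.re : ℍ[ℝ]) * p + ((normSq a : ℝ) : ℍ[ℝ]) = 0 ↔
      p.re = -a.re ∧ ‖p.im‖ = ‖a.im‖ := by
  have hsq : p ^ 2 + 2 * (a.re : ℍ[ℝ]) * p + ((normSq a : ℝ) : ℍ[ℝ])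
      = (a.re + p) ^ 2 + ((normSq a.im : ℝ) : ℍ[ℝ]) := by
    rw [(coe_commute a.re p).add_sq, normSq_eq_re_sq_add_normSq_im_s11 a, coe_add, coe_pow]
    abel
  rw [hsq, add_eq_zero_iff_eq_neg, sq_eq_neg_normSq_iff, re_add, re_coe, im_add, im_coe,
    zero_add, add_comm, eq_neg_iff_add_eq_zero]

end Quaternion

theorem blaschke_factor_formulas_general (a p : ℍ)
    (hp : ¬(p.re = -a.re ∧ ‖p.im‖ = ‖a.im‖)) :
    p ^ 2 + 2 * (a.re : ℍ) * p + ((Quaternion.normSq a : ℝ) : ℍ) ≠ 0 ∧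
    p + a ≠ 0 ∧
    (p + a)⁻¹ * p * (p + a) + star a ≠ 0 ∧
    (p ^ 2 + 2 * (a.re : ℍ) * p + ((Quaternion.normSq a : ℝ) : ℍ))⁻¹ * (p ^ 2 - a ^ 2)
      = ((p + a)⁻¹ * p * (p + a) + star a)⁻¹ * ((p + a)⁻¹ * p * (p + a) - a) ∧
    (p ^ 2 + 2 * (a.re : ℍ) * p + ((Quaternion.normSq a : ℝ) : ℍ))⁻¹ * (p ^ 2 - a ^ 2)
      = 1 - 2 * (a.re : ℍ) * ((p + a)⁻¹ * p * (p + a) + star a)⁻¹ := by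
  set Q := p ^ 2 + 2 * (a.re : ℍ) * p + ((Quaternion.normSq a : ℝ) : ℍ) with hQ_def
  set p' := (p + a)⁻¹ * p * (p + a)
  have hQ : Q ≠ 0 := mt (Quaternion.sq_add_two_re_mul_add_normSq_eq_zero_iff a p).mp hp
  have hpa : p + a ≠ 0 := fun h ↦ hQ (by
    rw [hQ_def, Quaternion.sq_add_two_re_mul_add_normSq_eq, h, mul_zero, zero_mul, add_zero])
  have hp'_add : p' + star a = (p + a)⁻¹ * Q := by
    rw [inv_mul_mul_add_eq_inv_mul hpa, ← Quaternion.sq_add_two_re_mul_add_normSq_eq]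
  have hp'_sub : p' - a = (p + a)⁻¹ * (p ^ 2 - a ^ 2) := by
    rw [sub_eq_add_neg, inv_mul_mul_add_eq_inv_mul hpa]
    noncomm_ring
  have hp' : p' + star a ≠ 0 := by
    rw [hp'_add]
    exact mul_ne_zero (inv_ne_zero hpa) hQ
  have hfirst : Q⁻¹ * (p ^ 2 - a ^ 2) = (p' + star a)⁻¹ * (p' - a) := by
    rw [hp'_add, hp'_sub, mul_inv_rev, inv_inv, mul_assoc, mul_inv_cancel_left₀ hpa]
  refine ⟨hQ, hpa, hp', hfirst, ?_⟩
  calc Q⁻¹ * (p ^ 2 - a ^ 2) = (p' + star a)⁻¹ * ((p' + star a) - 2 * (a.re : ℍ)) := by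
        rw [hfirst, ← Quaternion.self_add_star, add_sub_add_right_eq_sub]
    _ = 1 - 2 * (a.re : ℍ) * (p' + star a)⁻¹ := by
        rw [mul_sub, inv_mul_cancel₀ hp', (Quaternion.commute_two_mul_coe a.re _).eq]

/-- Pointwise formulas for the Blaschke factor `b_a` of the half-space `ℍ₊` at
`a` (with `Re a > 0`): for `p ∉ [−a]`, the quaternions `p² + 2 Re(a) p + |a|²`, `p + a`
and `p̃ + ā` are nonzero, where `p̃ = (p + a)⁻¹ p (p + a)`, and
`(p² + 2 Re(a) p + |a|²)⁻¹ (p² − a²) = (p̃ + ā)⁻¹ (p̃ − a) = 1 − 2 Re(a)(p̃ + ā)⁻¹`. -/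
theorem blaschke_factor_formulas (a p : ℍ)
    (ha : 0 < a.re) (hp : ¬(p.re = -a.re ∧ ‖p.im‖ = ‖a.im‖)) :
    p ^ 2 + 2 * (a.re : ℍ) * p + ((Quaternion.normSq a : ℝ) : ℍ) ≠ 0 ∧
    p + a ≠ 0 ∧
    (p + a)⁻¹ * p * (p + a) + star a ≠ 0 ∧
    (p ^ 2 + 2 * (a.re : ℍ) * p + ((Quaternion.normSq a : ℝ) : ℍ))⁻¹ * (p ^ 2 - a ^ 2)
      = ((p + a)⁻¹ * p * (p + a) + star a)⁻¹ * ((p + a)⁻¹ * p * (p + a) - a) ∧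
    (p ^ 2 + 2 * (a.re : ℍ) * p + ((Quaternion.normSq a : ℝ) : ℍ))⁻¹ * (p ^ 2 - a ^ 2)
      = 1 - 2 * (a.re : ℍ) * ((p + a)⁻¹ * p * (p + a) + star a)⁻¹ :=
  blaschke_factor_formulas_general a p hp
end

section
/- Let A ∈ ℍ^{N×N}, C ∈ ℍ^{N×m} and J ∈ ℍ^{m×m} with J = J*, J² = I_m, and A + A* = −C J C*. For real x with I_N − xA invertible, define S(x) = I_m − x C* (I_N − xA)⁻¹ C J. Then for all real x, y such that I_N − xA and I_N − yA are invertible, J − S(x) J S(y)* = (x + y) · C* (I_N − xA)⁻¹ ((I_N − yA)⁻¹)* C. -/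
local notation "ℍ" => Quaternion ℝ

open Matrix

/-- The key kernel identity for the characteristic operator function
`S(x) = I − x C*(I − xA)⁻¹ C J` of an operator `A` with `A + A* = −C J C*`:
for real `x, y` (with `I − xA`, `I − yA` invertible, two-sided inverses `X`, `Y`),
`J − S(x) J S(y)* = (x + y) C*(I − xA)⁻¹ ((I − yA)⁻¹)* C`. -/
theorem characteristic_function_kernel_identity
    {N m : ℕ} (A : Matrix (Fin N) (Fin N) ℍ) (C : Matrix (Fin N) (Fin m) ℍ)
    (J : Matrix (Fin m) (Fin m) ℍ)
    (hJ : Jᴴ = J) (hJ2 : J * J = 1)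
    (hA : A + Aᴴ = -(C * J * Cᴴ))
    (x y : ℝ) (X Y : Matrix (Fin N) (Fin N) ℍ)
    (hX₁ : (1 - x • A) * X = 1) (hX₂ : X * (1 - x • A) = 1)
    (hY₁ : (1 - y • A) * Y = 1) (hY₂ : Y * (1 - y • A) = 1) :
    J - (1 - x • (Cᴴ * X * C * J)) * J * (1 - y • (Cᴴ * Y * C * J))ᴴ
      = (x + y) • (Cᴴ * X * Yᴴ * C) := by
  have : StarModule ℝ ℍ := ⟨fun c q => by ext <;> simp⟩
  have hsmulT : ∀ {k l : ℕ} (c : ℝ) (M : Matrix (Fin k) (Fin l) ℍ), (c • M)ᴴ = c • Mᴴ := by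
    intro k l c M; rw [Matrix.conjTranspose_smul, star_trivial]
  have hYt : (1 - y • Aᴴ) * Yᴴ = 1 := by
    have := congrArg conjTranspose hY₂
    simpa [conjTranspose_mul, hsmulT] using this
  have e1 : X * Yᴴ - y • (X * (Aᴴ * Yᴴ)) = X := by
    calc X * Yᴴ - y • (X * (Aᴴ * Yᴴ)) = X * ((1 - y • Aᴴ) * Yᴴ) := by
          simp [Matrix.sub_mul, Matrix.mul_sub, Matrix.smul_mul, Matrix.mul_smul, Matrix.mul_assoc]
      _ = X := by rw [hYt, mul_one]
  have e2 : X * Yᴴ - x • (X * (A * Yᴴ)) = Yᴴ := by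
    calc X * Yᴴ - x • (X * (A * Yᴴ)) = X * (1 - x • A) * Yᴴ := by
          simp [Matrix.sub_mul, Matrix.mul_sub, Matrix.smul_mul, Matrix.mul_smul, Matrix.mul_assoc]
      _ = Yᴴ := by rw [hX₂, one_mul]
  have e3 : X * Yᴴ = X + y • (X * (Aᴴ * Yᴴ)) := sub_eq_iff_eq_add.mp e1
  have e4 : X * Yᴴ = Yᴴ + x • (X * (A * Yᴴ)) := sub_eq_iff_eq_add.mp e2
  have e5 : (x + y) • (X * Yᴴ) = x • X + y • Yᴴ + (x*y) • (X * ((A + Aᴴ) * Yᴴ)) := by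
    nth_rewrite 1 [add_smul]
    nth_rewrite 1 [e3]
    nth_rewrite 1 [e4]
    simp only [Matrix.add_mul, Matrix.mul_add, smul_add, smul_smul]
    module
  have hR : (x + y) • (Cᴴ * X * Yᴴ * C)
      = x • (Cᴴ * (X * C)) + y • (Cᴴ * (Yᴴ * C))
        - (x*y) • (Cᴴ * (X * (C * (J * (Cᴴ * (Yᴴ * C)))))) := by
    calc (x + y) • (Cᴴ * X * Yᴴ * C) = Cᴴ * ((x + y) • (X * Yᴴ)) * C := by
          rw [Matrix.mul_assoc Cᴴ X Yᴴ, Matrix.mul_smul, Matrix.smul_mul]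
      _ = _ := by
          rw [e5, hA]
          simp only [Matrix.mul_add, Matrix.add_mul, Matrix.mul_smul, Matrix.smul_mul,
            Matrix.neg_mul, Matrix.mul_neg, smul_neg, Matrix.mul_assoc]
          abel
  rw [hR]
  have hJ2' : ∀ {n : ℕ} (B : Matrix (Fin m) (Fin n) ℍ), J * (J * B) = B := by
    intro n B; rw [← Matrix.mul_assoc, hJ2, Matrix.one_mul]
  simp only [conjTranspose_sub, hsmulT, conjTranspose_one, conjTranspose_mul,
    conjTranspose_conjTranspose, hJ]
  simp only [Matrix.mul_sub, Matrix.sub_mul, Matrix.one_mul, Matrix.mul_one,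
    Matrix.mul_smul, Matrix.smul_mul, smul_sub, smul_smul, Matrix.mul_assoc, hJ2, hJ2']
  module
end

section
/- Let T₊ ∈ ℍ^{N×N} with T₊* = −T₊, let J ∈ ℍ^{n×n} with J* = −J and J² = −I_n, let C ∈ ℍ^{n×N}, and define T₋ = T₊ + C* J C (so that T₊ − T₋ = −C* J C). Then for all real x, y > 0: (i) the matrices xI_N − T₊ and xI_N − T₋ are invertible; (ii) setting Φ(x) = J + C (xI_N − T₊)⁻¹ C*, one has Φ(x) + Φ(y)* = (x + y) · C (xI_N − T₊)⁻¹ ((yI_N − T₊)⁻¹)* C*; and (iii) Φ(x) is invertible with Φ(x)⁻¹ = −J − J C (xI_N − T₋)⁻¹ C* J. -/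
/-!
If `T* = -T` and `Tv = xv` with `x` real, then `x (v*v) = v*Tv` is both self-adjoint and
anti-self-adjoint, so `v = 0`: hence `xI - T` is invertible for every real `x ≠ 0`, and this
applies to `T₋` as well, since `T₋* = -T₋`. Writing `R(x) = (xI - T₊)⁻¹`, one has
`R(y)* = (yI + T₊)⁻¹`, so (ii) is the resolvent identity
`R(x) + R(y)* = R(x) ((xI - T₊) + (yI + T₊)) R(y)*` sandwiched between `C` and `C*`.
Since `J⁻¹ = -J` and `R(x)⁻¹ - C*JC = xI - T₋`, (iii) is the Woodbury identity for
`J + C R(x) C*`.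
-/

local notation "ℍ" => Quaternion ℝ

open Matrix

/-- `Φ(x) = J + C (xI − T₊)⁻¹ C*`, the positive function associated with the pair of
anti-self-adjoint operators `(T₊, T₋)`, at a real point `x`. -/
noncomputable def Phi {N n : ℕ} (Tp : Matrix (Fin N) (Fin N) ℍ)
    (C : Matrix (Fin n) (Fin N) ℍ) (J : Matrix (Fin n) (Fin n) ℍ) (x : ℝ) :
    Matrix (Fin n) (Fin n) ℍ :=
  J + C * Ring.inverse (x • 1 - Tp) * Cᴴ

instance {R : Type*} [CommRing R] [Star R] [TrivialStar R] : StarModule R (Quaternion R) :=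
  ⟨fun r a => by rw [Quaternion.star_smul, star_trivial r]⟩

theorem Matrix.isUnit_of_mulVec_eq_zero {m K : Type*} [Fintype m] [DecidableEq m]
    [DivisionRing K] {A : Matrix m m K} (hA : ∀ v, A *ᵥ v = 0 → v = 0) : IsUnit A := by
  refine IsArtinianRing.isUnit_iff_isLeftRegular.2 <| isLeftRegular_iff_mulVec_injective.2 ?_
  intro v w h
  exact sub_eq_zero.1 <| hA _ <| by rw [mulVec_sub, h, sub_self]

theorem Quaternion.dotProduct_star_self_eq_zero {m : Type*} [Fintype m] {v : m → ℍ} :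
    star v ⬝ᵥ v = 0 ↔ v = 0 := by
  refine ⟨fun h => ?_, by rintro rfl; simp⟩
  have hsum : ∑ i, normSq (v i) = 0 := by
    apply Quaternion.coe_injective
    rw [Quaternion.coe_zero, ← h]
    simp only [dotProduct, Pi.star_apply, Quaternion.star_mul_self]
    exact map_sum (algebraMap ℝ ℍ) _ _
  rw [Finset.sum_eq_zero_iff_of_nonneg fun i _ => normSq_nonneg] at hsum
  funext i
  exact normSq_eq_zero.1 (hsum i (Finset.mem_univ i))

section AntiHermitian

variable {m : Type*} {T : Matrix m m ℍ}

theorem Matrix.conjTranspose_smul_one_sub_of_conjTranspose_eq_neg [DecidableEq m]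
    (hT : Tᴴ = -T) (x : ℝ) : (x • (1 : Matrix m m ℍ) - T)ᴴ = x • 1 + T := by
  rw [conjTranspose_sub, conjTranspose_smul, conjTranspose_one, hT, star_trivial, sub_neg_eq_add]

variable [Fintype m]

theorem Matrix.eq_zero_of_mulVec_eq_smul_of_conjTranspose_eq_neg (hT : Tᴴ = -T) {x : ℝ}
    (hx : x ≠ 0) {v : m → ℍ} (hv : T *ᵥ v = x • v) : v = 0 := by
  set s := star v ⬝ᵥ v
  have hTv : star v ⬝ᵥ (T *ᵥ v) = x • s := by rw [hv, dotProduct_smul]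
  have hs : star s = s := (star_dotProduct v v).symm
  have hneg : x • s = -(x • s) :=
    calc x • s = star v ⬝ᵥ (T *ᵥ v) := hTv.symm
      _ = star (star (T *ᵥ v) ⬝ᵥ v) := star_dotProduct _ _
      _ = -(x • s) := by
        rw [star_mulVec, hT, vecMul_neg, neg_dotProduct, ← dotProduct_mulVec, hTv, star_neg,
          Quaternion.star_smul, hs]
  -- `ℍ` has no `CharZero` instance, so `a = -a → a = 0` goes through `2 • a = 0` over `ℝ`.
  have htwo : (2 : ℝ) • x • s = 0 := by
    rw [two_smul]
    nth_rw 1 [hneg]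
    exact neg_add_cancel _
  rw [smul_smul, smul_eq_zero] at htwo
  exact Quaternion.dotProduct_star_self_eq_zero.1 (htwo.resolve_left (by positivity))

variable [DecidableEq m]

theorem Matrix.isUnit_smul_one_sub_of_conjTranspose_eq_neg (hT : Tᴴ = -T) {x : ℝ}
    (hx : x ≠ 0) : IsUnit (x • (1 : Matrix m m ℍ) - T) := by
  refine isUnit_of_mulVec_eq_zero fun v hv => ?_
  rw [sub_mulVec, smul_mulVec, one_mulVec, sub_eq_zero] at hv
  exact eq_zero_of_mulVec_eq_smul_of_conjTranspose_eq_neg hT hx hv.symm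

theorem Matrix.inverse_smul_one_sub_add_conjTranspose_inverse (hT : Tᴴ = -T) {x y : ℝ}
    (hx : x ≠ 0) (hy : y ≠ 0) :
    Ring.inverse (x • 1 - T) + (Ring.inverse (y • 1 - T))ᴴ
      = (x + y) • (Ring.inverse (x • 1 - T) * (Ring.inverse (y • 1 - T))ᴴ) := by
  have hconj := conjTranspose_smul_one_sub_of_conjTranspose_eq_neg hT y
  have hstar : (Ring.inverse (y • 1 - T))ᴴ = Ring.inverse (y • 1 + T) := by
    rw [← star_eq_conjTranspose, ← Ring.inverse_star, star_eq_conjTranspose, hconj]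
  have hyu : IsUnit (y • 1 + T) := by
    rw [← hconj, ← star_eq_conjTranspose]
    exact (isUnit_smul_one_sub_of_conjTranspose_eq_neg hT hy).star
  have hsum : x • 1 - T + (y • 1 + T) = (x + y) • (1 : Matrix m m ℍ) := by
    rw [add_smul]
    abel
  rw [hstar, Ring.inverse_add_inverse (iff_of_true
    (isUnit_smul_one_sub_of_conjTranspose_eq_neg hT hx) hyu), hsum, Matrix.mul_smul,
    Matrix.mul_one, Matrix.smul_mul]

end AntiHermitian

/-- The Woodbury identity for `J + C S⁻¹ D`, with `J⁻¹ = -J`. -/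
theorem Matrix.inverse_formula_of_mul_self_eq_neg_one {m n α : Type*} [Fintype m]
    [DecidableEq m] [Fintype n] [DecidableEq n] [Ring α] {J : Matrix n n α} (hJ : J * J = -1)
    (C : Matrix n m α) (D : Matrix m n α) {S : Matrix m m α} (hS : IsUnit S)
    (hSJ : IsUnit (S - D * J * C)) :
    (J + C * Ring.inverse S * D) * (-J - J * C * Ring.inverse (S - D * J * C) * D * J) = 1 ∧
      (-J - J * C * Ring.inverse (S - D * J * C) * D * J) * (J + C * Ring.inverse S * D) = 1 := by
  let _ : Invertible J := ⟨-J, by simp [hJ], by simp [hJ]⟩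
  let _ : Invertible (Ring.inverse S) :=
    ⟨S, Ring.mul_inverse_cancel S hS, Ring.inverse_mul_cancel S hS⟩
  have hW : ⅟(Ring.inverse S) + D * ⅟J * C = S - D * J * C := by
    change S + D * -J * C = _
    simp [sub_eq_add_neg]
  let _ : Invertible (⅟(Ring.inverse S) + D * ⅟J * C) := (hW ▸ hSJ).invertible
  have hΨ : ⅟J - ⅟J * C * ⅟(⅟(Ring.inverse S) + D * ⅟J * C) * D * ⅟J
      = -J - J * C * Ring.inverse (S - D * J * C) * D * J := by
    rw [← Ring.inverse_invertible (⅟(Ring.inverse S) + D * ⅟J * C), hW]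
    change -J - -J * C * _ * D * -J = _
    simp only [Matrix.neg_mul, Matrix.mul_neg, neg_neg]
  rw [← hΨ]
  exact ⟨add_mul_mul_invOf_mul_eq_one _ _ _ _, add_mul_mul_invOf_mul_eq_one' _ _ _ _⟩

/-- For an anti-self-adjoint `T₊`, a signature-type matrix `J` with `J* = −J`, `J² = −I`,
and `T₋ = T₊ + C* J C` (so `T₊ − T₋ = −C* J C`): for all real `x, y > 0` the matrices
`xI − T₊` and `xI − T₋` are invertible, the function `Φ(x) = J + C (xI − T₊)⁻¹ C*`
satisfies `Φ(x) + Φ(y)* = (x + y) C (xI − T₊)⁻¹ ((yI − T₊)⁻¹)* C*`, and `Φ(x)` is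
invertible with `Φ(x)⁻¹ = −J − J C (xI − T₋)⁻¹ C* J`. -/
theorem positive_function_of_antiselfadjoint_pair
    {N n : ℕ} (Tp : Matrix (Fin N) (Fin N) ℍ)
    (hTp : Tpᴴ = -Tp)
    (J : Matrix (Fin n) (Fin n) ℍ) (hJ : Jᴴ = -J) (hJ2 : J * J = -1)
    (C : Matrix (Fin n) (Fin N) ℍ) :
    ∀ x y : ℝ, 0 < x → 0 < y →
      (IsUnit (x • (1 : Matrix (Fin N) (Fin N) ℍ) - Tp) ∧
        IsUnit (x • (1 : Matrix (Fin N) (Fin N) ℍ) - (Tp + Cᴴ * J * C))) ∧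
      (Phi Tp C J x + (Phi Tp C J y)ᴴ
        = (x + y) • (C * Ring.inverse (x • 1 - Tp) * (Ring.inverse (y • 1 - Tp))ᴴ * Cᴴ)) ∧
      (Phi Tp C J x * (-J - J * C * Ring.inverse (x • 1 - (Tp + Cᴴ * J * C)) * Cᴴ * J) = 1 ∧
        (-J - J * C * Ring.inverse (x • 1 - (Tp + Cᴴ * J * C)) * Cᴴ * J) * Phi Tp C J x = 1) := by
  intro x y hx hy
  have hTm : (Tp + Cᴴ * J * C)ᴴ = -(Tp + Cᴴ * J * C) := by
    simp only [conjTranspose_add, conjTranspose_mul, conjTranspose_conjTranspose, hTp, hJ,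
      Matrix.mul_neg, Matrix.neg_mul, Matrix.mul_assoc, neg_add]
  have hux := isUnit_smul_one_sub_of_conjTranspose_eq_neg hTp hx.ne'
  have hum := isUnit_smul_one_sub_of_conjTranspose_eq_neg hTm hx.ne'
  refine ⟨⟨hux, hum⟩, ?_, ?_⟩
  · calc Phi Tp C J x + (Phi Tp C J y)ᴴ
        = C * (Ring.inverse (x • 1 - Tp) + (Ring.inverse (y • 1 - Tp))ᴴ) * Cᴴ := by
          simp only [Phi, conjTranspose_add, conjTranspose_mul, conjTranspose_conjTranspose, hJ,
            Matrix.mul_add, Matrix.add_mul, Matrix.mul_assoc]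
          abel
      _ = _ := by
          rw [inverse_smul_one_sub_add_conjTranspose_inverse hTp hx.ne' hy.ne', Matrix.mul_smul,
            Matrix.smul_mul, ← Matrix.mul_assoc C]
  · have hS : x • 1 - Tp - Cᴴ * J * C = x • 1 - (Tp + Cᴴ * J * C) := sub_sub _ _ _
    simpa only [Phi, hS] using inverse_formula_of_mul_self_eq_neg_one hJ2 C Cᴴ hux (hS ▸ hum)
end

section
/- Let A ∈ ℍ^{n₁×n₁}, C ∈ ℍ^{m×n₁}, D ∈ ℍ^{m×m}, L ∈ ℍ^{n₁×k} and K ∈ ℍ^{m×k} satisfy A + A* + L L* = 0 and D + D* = K K*, and set B = C* − L K* ∈ ℍ^{n₁×m}. For real x with I − xA invertible define Φ(x) = D + x C (I − xA)⁻¹ B. Then for all real x, y such that I − xA and I − yA are invertible, Φ(x) + Φ(y)* = (K − x C (I − xA)⁻¹ L)(K − y C (I − yA)⁻¹ L)* + (x + y) · C (I − xA)⁻¹ ((I − yA)⁻¹)* C*. In particular, for every real x ≥ 0 with I − xA invertible, Φ(x) + Φ(x)* is positive semidefinite, i.e. v* (Φ(x) + Φ(x)*) v ≥ 0 for every v ∈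 ℍᵐ. -/
local notation "ℍ" => Quaternion ℝ

open Matrix

private lemma smulCT {p q : ℕ} (r : ℝ) (M : Matrix (Fin p) (Fin q) ℍ) :
    (r • M)ᴴ = r • Mᴴ := by
  refine Matrix.ext fun i j => ?_
  simp [Matrix.conjTranspose_apply, Quaternion.star_smul]

private lemma quad_form_nonneg {m j : ℕ} (N : Matrix (Fin m) (Fin j) ℍ) (v : Fin m → ℍ) :
    ∃ r : ℝ, 0 ≤ r ∧ star v ⬝ᵥ ((N * Nᴴ) *ᵥ v) = (r : ℍ) := by
  refine ⟨∑ i, Quaternion.normSq ((Nᴴ *ᵥ v) i),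
    Finset.sum_nonneg fun i _ => Quaternion.normSq_nonneg, ?_⟩
  have h1 : star v ⬝ᵥ ((N * Nᴴ) *ᵥ v) = star (Nᴴ *ᵥ v) ⬝ᵥ (Nᴴ *ᵥ v) := by
    rw [← mulVec_mulVec, dotProduct_mulVec, star_mulVec, conjTranspose_conjTranspose]
  have h2 : ((∑ i, Quaternion.normSq ((Nᴴ *ᵥ v) i) : ℝ) : ℍ)
      = ∑ i, (((Quaternion.normSq ((Nᴴ *ᵥ v) i) : ℝ)) : ℍ) := by
    simpa only [Quaternion.algebraMap_def] using
      map_sum (algebraMap ℝ ℍ) (fun i => Quaternion.normSq ((Nᴴ *ᵥ v) i)) Finset.univ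
  rw [h1, dotProduct, h2]
  simp only [Pi.star_apply, Quaternion.star_mul_self]

set_option maxHeartbeats 1000000 in
/-- For a dissipative realization `A + A* + LL* = 0`, `D + D* = KK*`, `B = C* − LK*`,
the function `Φ(x) = D + x C (I − xA)⁻¹ B` satisfies
`Φ(x) + Φ(y)* = (K − x C (I − xA)⁻¹ L)(K − y C (I − yA)⁻¹ L)* +
(x + y) C (I − xA)⁻¹ ((I − yA)⁻¹)* C*`; in particular `Φ(x) + Φ(x)*` is positive
semidefinite for every real `x ≥ 0` at which `I − xA` is invertible. -/
theorem dissipative_realization_positive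
    {n₁ m k : ℕ} (A : Matrix (Fin n₁) (Fin n₁) ℍ) (C : Matrix (Fin m) (Fin n₁) ℍ)
    (D : Matrix (Fin m) (Fin m) ℍ) (L : Matrix (Fin n₁) (Fin k) ℍ)
    (K : Matrix (Fin m) (Fin k) ℍ)
    (hA : A + Aᴴ + L * Lᴴ = 0) (hD : D + Dᴴ = K * Kᴴ) :
    (∀ (x y : ℝ) (X Y : Matrix (Fin n₁) (Fin n₁) ℍ),
      (1 - x • A) * X = 1 → X * (1 - x • A) = 1 →
      (1 - y • A) * Y = 1 → Y * (1 - y • A) = 1 →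
      (D + x • (C * X * (Cᴴ - L * Kᴴ))) + (D + y • (C * Y * (Cᴴ - L * Kᴴ)))ᴴ
        = (K - x • (C * X * L)) * (K - y • (C * Y * L))ᴴ
            + (x + y) • (C * X * Yᴴ * Cᴴ)) ∧
    (∀ x : ℝ, 0 ≤ x → ∀ X : Matrix (Fin n₁) (Fin n₁) ℍ,
      (1 - x • A) * X = 1 → X * (1 - x • A) = 1 →
      ∀ v : Fin m → ℍ, ∃ r : ℝ, 0 ≤ r ∧
        star v ⬝ᵥ (((D + x • (C * X * (Cᴴ - L * Kᴴ)))
            + (D + x • (C * X * (Cᴴ - L * Kᴴ)))ᴴ) *ᵥ v) = (r : ℍ)) := by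
  have hL : L * Lᴴ = -(A + Aᴴ) :=
    eq_neg_of_add_eq_zero_left (by rwa [add_comm (A + Aᴴ) (L * Lᴴ)] at hA)
  have main : ∀ (x y : ℝ) (X Y : Matrix (Fin n₁) (Fin n₁) ℍ),
      (1 - x • A) * X = 1 → X * (1 - x • A) = 1 →
      (1 - y • A) * Y = 1 → Y * (1 - y • A) = 1 →
      (D + x • (C * X * (Cᴴ - L * Kᴴ))) + (D + y • (C * Y * (Cᴴ - L * Kᴴ)))ᴴ
        = (K - x • (C * X * L)) * (K - y • (C * Y * L))ᴴ
            + (x + y) • (C * X * Yᴴ * Cᴴ) := by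
    intro x y X Y hX1 hX2 hY1 hY2
    have hYH : (1 - y • A)ᴴ * Yᴴ = 1 := by
      rw [← conjTranspose_mul, hY2, conjTranspose_one]
    have hAH : (1 - y • A)ᴴ = 1 - y • Aᴴ := by
      rw [conjTranspose_sub, conjTranspose_one, smulCT]
    have mid : x • ((1 : Matrix (Fin n₁) (Fin n₁) ℍ) - y • Aᴴ) + y • (1 - x • A)
        = (x + y) • (1 : Matrix (Fin n₁) (Fin n₁) ℍ) - (x * y) • (A + Aᴴ) := by
      module
    have left : X * (x • ((1 : Matrix (Fin n₁) (Fin n₁) ℍ) - y • Aᴴ) + y • (1 - x • A)) * Yᴴ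
        = x • X + y • Yᴴ := by
      calc X * (x • ((1 : Matrix (Fin n₁) (Fin n₁) ℍ) - y • Aᴴ) + y • (1 - x • A)) * Yᴴ
          = x • (X * ((1 - y • A)ᴴ * Yᴴ)) + y • ((X * (1 - x • A)) * Yᴴ) := by
            rw [hAH]
            simp only [Matrix.mul_add, Matrix.add_mul, Matrix.mul_smul, Matrix.smul_mul,
              Matrix.mul_assoc]
        _ = x • X + y • Yᴴ := by rw [hYH, hX2, Matrix.mul_one, Matrix.one_mul]
    have right : X * ((x + y) • (1 : Matrix (Fin n₁) (Fin n₁) ℍ) - (x * y) • (A + Aᴴ)) * Yᴴ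
        = (x + y) • (X * Yᴴ) - (x * y) • (X * (A + Aᴴ) * Yᴴ) := by
      simp only [Matrix.mul_sub, Matrix.sub_mul, Matrix.mul_smul, Matrix.smul_mul,
        Matrix.mul_one]
    have key : x • X + y • Yᴴ = (x + y) • (X * Yᴴ) + (x * y) • (X * (L * Lᴴ) * Yᴴ) := by
      rw [hL, Matrix.mul_neg, Matrix.neg_mul, smul_neg, ← sub_eq_add_neg, ← right, ← mid, left]
    have key' := congrArg (fun M => C * M * Cᴴ) key
    simp only [Matrix.mul_add, Matrix.add_mul, Matrix.mul_smul, Matrix.smul_mul,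
      Matrix.mul_assoc] at key'
    have hConj : (D + y • (C * Y * (Cᴴ - L * Kᴴ)))ᴴ
        = Dᴴ + y • ((C - K * Lᴴ) * (Yᴴ * Cᴴ)) := by
      simp only [conjTranspose_add, smulCT, conjTranspose_mul, conjTranspose_sub,
        conjTranspose_conjTranspose, Matrix.mul_assoc]
    have goalEq : D + x • (C * X * (Cᴴ - L * Kᴴ)) + (D + y • (C * Y * (Cᴴ - L * Kᴴ)))ᴴ
        = (D + Dᴴ) + (x • (C * (X * Cᴴ)) + y • (C * (Yᴴ * Cᴴ)))
            - x • (C * (X * (L * Kᴴ))) - y • (K * (Lᴴ * (Yᴴ * Cᴴ))) := by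
      rw [hConj]
      simp only [Matrix.mul_sub, Matrix.sub_mul, smul_sub, Matrix.mul_assoc]
      abel
    have rhsCT : (K - y • (C * Y * L))ᴴ = Kᴴ - y • (Lᴴ * (Yᴴ * Cᴴ)) := by
      simp only [conjTranspose_sub, smulCT, conjTranspose_mul, Matrix.mul_assoc]
    have rhsEq : (K - x • (C * X * L)) * (K - y • (C * Y * L))ᴴ + (x + y) • (C * X * Yᴴ * Cᴴ)
        = K * Kᴴ + ((x + y) • (C * (X * (Yᴴ * Cᴴ)))
              + (x * y) • (C * (X * (L * (Lᴴ * (Yᴴ * Cᴴ))))))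
            - x • (C * (X * (L * Kᴴ))) - y • (K * (Lᴴ * (Yᴴ * Cᴴ))) := by
      rw [rhsCT]
      simp only [Matrix.mul_sub, Matrix.sub_mul, Matrix.mul_smul, Matrix.smul_mul, smul_smul,
        smul_sub, Matrix.mul_assoc]
      rw [mul_comm y x]
      abel
    rw [goalEq, rhsEq, hD, key']
  refine ⟨main, ?_⟩
  intro x hx X hX1 hX2 v
  have h := main x x X X hX1 hX2 hX1 hX2
  rw [h]
  obtain ⟨r₁, hr₁, e₁⟩ := quad_form_nonneg (K - x • (C * X * L)) v
  obtain ⟨r₂, hr₂, e₂⟩ := quad_form_nonneg (C * X) v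
  refine ⟨r₁ + (x + x) * r₂, by positivity, ?_⟩
  have hCX : C * X * Xᴴ * Cᴴ = (C * X) * (C * X)ᴴ := by
    rw [conjTranspose_mul, Matrix.mul_assoc]
  rw [hCX, add_mulVec, dotProduct_add, e₁, smul_mulVec, dotProduct_smul, e₂]
  have : ((x + x) • ((r₂ : ℝ) : ℍ)) = (((x + x) * r₂ : ℝ) : ℍ) := by
    rw [← smul_eq_mul, Quaternion.coe_smul]
  rw [this]
  norm_cast
end
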